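/- Suppose that for every even L the linear functional ⟨·⟩ is reflection positive both for reflections through edges and for reflections through vertices, the two-point function G_L is torus symmetric, there are constants C₁ > 0 and M ∈ (0,∞) such that liminf over even L → ∞ of (1/|T_L|) Σ_{x∈T_L} G_L(o,x) ≥ C₁, and G_L(x,y) ≤ M for all even L and all x, y ∈ T_L. Then for any ε ∈ (0, 1/2) and any C < C₁, for all sufficiently large even L the following holds: for every x ∈ T_L such that for every i ∈ {1,…,d} the coordinate |x·e_i| lies in (0, εL), one has G_L(o, x) ≥ M − (1/2 − ε)^{−d} (M − C). -/

import Mathlib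

/-!
Put `G x = G_L(o, x)` and `H x = M - G x ≥ 0`. Reflection positivity for the reflection between
the layers `x j = 0` and `x j = 1` makes `(A, B) ↦ ⟨A · θB⟩` positive semidefinite on functions of
the half space `x j ∈ {1, …, L/2}`. By torus symmetry its Gram matrix on the products
`F²_w ∏_{z ∈ T⁺ ∖ {w}} F¹_z` is `G` at a point of the slab `x j = -(1 + i + i')`, where `i, i'` are
the layers of the two points. Summed over a lattice `Λ` of transverse translations this gives slab
sums `W σ` with `W (2i) ≥ 0`, `W (i + i') ^ 2 ≤ W (2i) W (2i')` and `W (2i) = W (L - 2 - 2i)`, so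
the slab deficits `#Λ M - W (2i)` are smallest at the two ends of any symmetric range of levels;
and for `x` in the slab `i + i'`, `2 #Λ H x` is at most the sum of the deficits of the slabs `2i`,
`2i'` and twice that of the slab `i + i'`.

If `x j` is odd take `i = i'`: the `L/2 - |x j|` even levels between `2i` and its mirror image
carry disjoint slabs whose deficits are each at least that of level `2i` and add up to at most
`∑ H ≤ (M - C) L^d` (for large `L`, by the liminf hypothesis). If all coordinates of `x` are even,
the odd slab `i + i'` consists of points with all coordinates even, which are bounded the same way
in a second direction; over the even transverse sublattice all slabs that occur lie in the disjoint
parity classes `{j}`, `{k}`, `∅`, so `∑ H` is again used only once.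
-/

namespace RPPaper

/-- The torus `T_L = (ℤ/Lℤ)^d`. -/
abbrev Torus (d L : ℕ) : Type := Fin d → ZMod L

/-- The unit vector `e i`. -/
def unitVec {d L : ℕ} (i : Fin d) : Torus d L := fun k => if k = i then 1 else 0

/-- The point `a • e i` on the torus. -/
def axis {d L : ℕ} (i : Fin d) (a : ZMod L) : Torus d L := fun k => if k = i then a else 0

/-- The integer representative of `a : ZMod L` in the interval `(-L/2, L/2]`. -/
def coordRep (L : ℕ) [NeZero L] (a : ZMod L) : ℤ :=
  if (a.val : ℤ) ≤ (L : ℤ) / 2 then (a.val : ℤ) else (a.val : ℤ) - (L : ℤ)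

/-- The reflection of the torus in the hyperplane `{z : z·e i = t/2}` (here `t = 2m`);
it is a reflection through edges if `t` is odd, and through vertices if `t` is even. -/
def reflect {d L : ℕ} (i : Fin d) (t : ℕ) (x : Torus d L) : Torus d L :=
  Function.update x i ((t : ZMod L) - x i)

/-- The positive half `T_L^+` of the torus associated to the reflection in the hyperplane
`{z : z·e i = t/2}`. -/
def posHalf (d L : ℕ) [NeZero L] (i : Fin d) (t : ℕ) : Finset (Torus d L) :=
  if t % 2 = 1 then Finset.univ.filter (fun x => (x i - (((t + 1) / 2 : ℕ) : ZMod L)).val < L / 2)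
  else Finset.univ.filter (fun x => (x i - ((t / 2 : ℕ) : ZMod L)).val ≤ L / 2)

/-- The negative half `T_L^- = θ(T_L^+)`. -/
def negHalf (d L : ℕ) [NeZero L] (i : Fin d) (t : ℕ) : Finset (Torus d L) :=
  (posHalf d L i t).image (reflect i t)

/-- The state space `S = ∏_{x ∈ T_L} Σ_x` (all local state spaces equal to `Sig`). -/
abbrev MState (d L : ℕ) (Sig : Type*) : Type _ := Torus d L → Sig

/-- `A : S → ℝ` has domain `D` if it depends only on the local states in `D`. -/
def HasDomain {d L : ℕ} {Sig : Type*} (A : MState d L Sig → ℝ) (D : Set (Torus d L)) : Prop :=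
  ∀ w₁ w₂ : MState d L Sig, (∀ x ∈ D, w₁ x = w₂ x) → A w₁ = A w₂

/-- The action `θA (w) = A (θ w)`, where `(θ w) x = w (θ x)`, of the reflection on functions. -/
def reflectFun {d L : ℕ} {Sig : Type*} (i : Fin d) (t : ℕ) (A : MState d L Sig → ℝ) :
    MState d L Sig → ℝ := fun w => A (fun x => w (reflect i t x))

/-- `⟨·⟩` is reflection positive with respect to the reflection in the hyperplane
`{z : z·e i = t/2}`: for all `A, B ∈ A_L^+` (members of the algebra with domain `T_L^+`),
`⟨A·θB⟩ = ⟨B·θA⟩` and `⟨A·θA⟩ ≥ 0`. -/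
def IsRP {d L : ℕ} {Sig : Type*} [NeZero L] (AL : Subalgebra ℝ (MState d L Sig → ℝ))
    (phi : (MState d L Sig → ℝ) →ₗ[ℝ] ℝ) (i : Fin d) (t : ℕ) : Prop :=
  ∀ A B : MState d L Sig → ℝ, A ∈ AL → B ∈ AL →
    HasDomain A ↑(posHalf d L i t) → HasDomain B ↑(posHalf d L i t) →
    phi (A * reflectFun i t B) = phi (B * reflectFun i t A) ∧ 0 ≤ phi (A * reflectFun i t A)

/-- Reflection positivity for all reflections through edges. -/
def RPEdges {d L : ℕ} {Sig : Type*} [NeZero L] (AL : Subalgebra ℝ (MState d L Sig → ℝ))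
    (phi : (MState d L Sig → ℝ) →ₗ[ℝ] ℝ) : Prop :=
  ∀ (i : Fin d) (t : ℕ), t < 2 * L → t % 2 = 1 → IsRP AL phi i t

/-- Reflection positivity for all reflections through vertices. -/
def RPVertices {d L : ℕ} {Sig : Type*} [NeZero L] (AL : Subalgebra ℝ (MState d L Sig → ℝ))
    (phi : (MState d L Sig → ℝ) →ₗ[ℝ] ℝ) : Prop :=
  ∀ (i : Fin d) (t : ℕ), t < 2 * L → t % 2 = 0 → IsRP AL phi i t

/-- The single-site function `F^j_x`, obtained from a function `f : Sig → ℝ` of the local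
state at the origin by the (path-independent) sequence of reflections sending `o` to `x`. -/
def site {d L : ℕ} {Sig : Type*} (f : Sig → ℝ) (x : Torus d L) : MState d L Sig → ℝ :=
  fun w => f (w x)

/-- The two-point function `G_L(x,y) = ⟨F²_x F²_y ∏_{z ≠ x,y} F¹_z⟩`. -/
noncomputable def twoPoint {d L : ℕ} {Sig : Type*} [NeZero L]
    (phi : (MState d L Sig → ℝ) →ₗ[ℝ] ℝ) (f1 f2 : Sig → ℝ) (x y : Torus d L) : ℝ :=
  phi (fun w => f2 (w x) * f2 (w y) * ∏ z ∈ (Finset.univ.erase x).erase y, f1 (w z))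

/-- Torus symmetry: `⟨∏_{x∈A}F¹_x ∏_{x∈B}F²_x⟩ = ⟨∏_{x∈A+z}F¹_x ∏_{x∈B+z}F²_x⟩`. -/
def TorusSymmetric {d L : ℕ} {Sig : Type*} [NeZero L]
    (phi : (MState d L Sig → ℝ) →ₗ[ℝ] ℝ) (f1 f2 : Sig → ℝ) : Prop :=
  ∀ (A B : Finset (Torus d L)) (z : Torus d L),
    phi (fun w => (∏ x ∈ A, f1 (w x)) * ∏ x ∈ B, f2 (w x)) =
      phi (fun w => (∏ x ∈ A, f1 (w (x + z))) * ∏ x ∈ B, f2 (w (x + z)))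


open scoped Finset

section ZModParity

variable {L : ℕ} [NeZero L]

lemma natCast_sub_val (a : ZMod L) : ((L - a.val : ℕ) : ZMod L) = -a := by
  rw [Nat.cast_sub (ZMod.val_lt a).le, ZMod.natCast_self, ZMod.natCast_val, ZMod.cast_id',
    id, zero_sub]

lemma val_neg_one_sub (a : ZMod L) : (-1 - a).val = L - 1 - a.val := by
  have ha := ZMod.val_lt a
  have h : -1 - a = ((L - 1 - a.val : ℕ) : ZMod L) := by
    rw [Nat.cast_sub (by omega), Nat.cast_sub (NeZero.one_le), ZMod.natCast_self,
      ZMod.natCast_val, ZMod.cast_id', id, Nat.cast_one, zero_sub]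
  rw [h, ZMod.val_cast_of_lt (by omega)]

lemma val_add_mod_two (hL : Even L) (a b : ZMod L) : (a + b).val % 2 = (a.val + b.val) % 2 := by
  rw [ZMod.val_add, Nat.mod_mod_of_dvd _ hL.two_dvd]

lemma val_neg_mod_two (hL : Even L) (a : ZMod L) : (-a).val % 2 = a.val % 2 := by
  rw [ZMod.neg_val', Nat.mod_mod_of_dvd _ hL.two_dvd]
  have := ZMod.val_lt a
  obtain ⟨K, rfl⟩ := hL
  omega

def evens (L : ℕ) : Finset (ZMod L) :=
  (Finset.range (L / 2)).image fun n => ((2 * n : ℕ) : ZMod L)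

lemma mem_evens (hL : Even L) {a : ZMod L} : a ∈ evens L ↔ a.val % 2 = 0 := by
  obtain ⟨K, rfl⟩ := hL
  simp only [evens, Finset.mem_image, Finset.mem_range]
  constructor
  · rintro ⟨n, hn, rfl⟩
    rw [ZMod.val_natCast_of_lt (by omega)]
    omega
  · intro ha
    refine ⟨a.val / 2, by have := ZMod.val_lt a; omega, ?_⟩
    rw [show 2 * (a.val / 2) = a.val by omega, ZMod.natCast_val, ZMod.cast_id', id]

lemma card_evens (hL : Even L) : #(evens L) = L / 2 := by
  obtain ⟨K, rfl⟩ := hL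
  rw [evens, Finset.card_image_of_injOn, Finset.card_range]
  intro m hm n hn e
  simp only [Finset.coe_range, Set.mem_Iio] at hm hn
  have := congrArg ZMod.val e
  simp only [ZMod.val_natCast_of_lt (show 2 * m < K + K by omega),
    ZMod.val_natCast_of_lt (show 2 * n < K + K by omega)] at this
  omega

lemma sub_mem_evens (hL : Even L) : ∀ a ∈ evens L, ∀ b ∈ evens L, a - b ∈ evens L := by
  intro a ha b hb
  rw [mem_evens hL] at ha hb ⊢
  rw [sub_eq_add_neg, val_add_mod_two hL]
  have := val_neg_mod_two hL b
  omega

lemma zero_mem_evens (hL : Even L) : 0 ∈ evens L := by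
  rw [mem_evens hL, ZMod.val_zero]

lemma coordRep_zero : coordRep L 0 = 0 := by
  rw [coordRep, ZMod.val_zero, Nat.cast_zero, if_pos (by positivity)]

lemma exists_natCast_eq_abs_coordRep (hL : Even L) (a : ZMod L) :
    ∃ D : ℕ, (D : ℤ) = |coordRep L a| ∧ D ≤ L / 2 ∧ ((D : ZMod L) = -a ∨ (D : ZMod L) = a) := by
  have ha := ZMod.val_lt a
  obtain ⟨K, rfl⟩ := hL
  unfold coordRep
  split_ifs with h
  · exact ⟨a.val, by rw [abs_of_nonneg (by positivity)], by omega,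
      Or.inr (by rw [ZMod.natCast_val, ZMod.cast_id', id])⟩
  · refine ⟨K + K - a.val, ?_, by omega, Or.inl (natCast_sub_val a)⟩
    rw [abs_of_neg (by omega)]
    omega

end ZModParity

section Sums

variable {G : Type*} [AddCommGroup G] {Λ : Finset G}

lemma sum_sub_left (hΛ : ∀ r ∈ Λ, ∀ s ∈ Λ, r - s ∈ Λ) {t : G} (ht : t ∈ Λ) (F : G → ℝ) :
    ∑ r ∈ Λ, F (t - r) = ∑ r ∈ Λ, F r :=
  Finset.sum_nbij' (t - ·) (t - ·) (fun r hr => hΛ t ht r hr) (fun r hr => hΛ t ht r hr)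
    (fun r _ => sub_sub_cancel t r) (fun r _ => sub_sub_cancel t r) (fun _ _ => rfl)

lemma sum_neg (hΛ : ∀ r ∈ Λ, ∀ s ∈ Λ, r - s ∈ Λ) (h0 : 0 ∈ Λ) (F : G → ℝ) :
    ∑ r ∈ Λ, F (-r) = ∑ r ∈ Λ, F r := by
  simpa using sum_sub_left hΛ h0 F

lemma sum_sub_right (hΛ : ∀ r ∈ Λ, ∀ s ∈ Λ, r - s ∈ Λ) {t : G} (ht : t ∈ Λ) (F : G → ℝ) :
    ∑ r ∈ Λ, F (r - t) = ∑ r ∈ Λ, F r := by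
  calc ∑ r ∈ Λ, F (r - t) = ∑ r ∈ Λ, F (-(t - r)) := by simp only [neg_sub]
    _ = ∑ r ∈ Λ, F (-r) := sum_sub_left hΛ ht fun s => F (-s)
    _ = ∑ r ∈ Λ, F r := sum_neg hΛ (sub_self t ▸ hΛ t ht t ht) F

lemma sum_piFinset_apply_eq {ι κ : Type*} [DecidableEq ι] [Fintype ι] [DecidableEq κ]
    (t : ι → Finset κ) (k : ι) (g : κ → ℝ) :
    ∑ r ∈ Fintype.piFinset t, g (r k) = (∏ i ∈ Finset.univ.erase k, #(t i)) * ∑ c ∈ t k, g c := by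
  rw [← Finset.sum_fiberwise_of_maps_to (g := fun r : ι → κ => r k) (t := t k)
    fun r hr => Fintype.mem_piFinset.mp hr k, Finset.mul_sum]
  refine Finset.sum_congr rfl fun c hc => ?_
  rw [Finset.sum_congr rfl fun r hr => congrArg g (Finset.mem_filter.mp hr).2, Finset.sum_const,
    Fintype.card_filter_piFinset_eq_of_mem t k hc, nsmul_eq_mul]

lemma prod_univ_erase_erase_eq_mul {α : Type*} [Fintype α] [DecidableEq α] {s : Finset α}
    {u v : α} (hu : u ∈ s) (hv : v ∉ s) (g : α → ℝ) :
    ∏ z ∈ (Finset.univ.erase u).erase v, g z = (∏ z ∈ s.erase u, g z) * ∏ z ∈ sᶜ.erase v, g z := by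
  rw [← Finset.prod_filter_mul_prod_filter_not _ (· ∈ s)]
  simp only [Finset.filter_erase, Finset.filter_mem_eq_inter, Finset.univ_inter]
  rw [Finset.erase_eq_of_notMem fun h => hv (Finset.mem_of_mem_erase h)]
  congr 2
  rw [Finset.erase_right_comm, Finset.erase_eq_of_notMem (by simp [hu])]
  ext
  simp

/-- At a leftmost interior maximum `f (m - 1) < f m ≥ f (m + 1)`, which is incompatible with
`f m ^ 2 ≤ f (m - 1) * f (m + 1)`. -/
lemma le_of_sq_le_mul_of_eq {f : ℕ → ℝ} {a b : ℕ} (hab : a ≤ b)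
    (hnn : ∀ m, a ≤ m → m ≤ b → 0 ≤ f m)
    (hlc : ∀ m, a < m → m < b → f m ^ 2 ≤ f (m - 1) * f (m + 1))
    (hend : f b = f a) {m : ℕ} (ham : a ≤ m) (hmb : m ≤ b) : f m ≤ f a := by
  by_contra! hlt
  obtain ⟨n, hn, hmax⟩ := (Finset.Icc a b).exists_max_image f ⟨a, Finset.mem_Icc.mpr ⟨le_rfl, hab⟩⟩
  have hP : ∃ k, (a ≤ k ∧ k ≤ b) ∧ f k = f n := ⟨n, Finset.mem_Icc.mp hn, rfl⟩
  obtain ⟨⟨hak, hkb⟩, hk⟩ := Nat.find_spec hP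
  set k := Nat.find hP
  have hfm : f m ≤ f n := hmax m (Finset.mem_Icc.mpr ⟨ham, hmb⟩)
  have hka : k ≠ a := fun e => by rw [e] at hk; linarith
  have hkb' : k ≠ b := fun e => by rw [e, hend] at hk; linarith
  have hleft : f (k - 1) < f n := lt_of_le_of_ne (hmax _ (Finset.mem_Icc.mpr ⟨by omega, by omega⟩))
    fun e => Nat.find_min hP (show k - 1 < k by omega) ⟨⟨by omega, by omega⟩, e⟩
  have hright : f (k + 1) ≤ f n := hmax _ (Finset.mem_Icc.mpr ⟨by omega, by omega⟩)
  have h0 := hnn (k - 1) (by omega) (by omega)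
  have h1 := hnn a le_rfl hab
  have h2 := hlc k (by omega) (by omega)
  rw [hk] at h2
  nlinarith

end Sums

section Reflection

variable {d L : ℕ}

@[simp] lemma reflect_apply_self (i : Fin d) (t : ℕ) (x : Torus d L) :
    reflect i t x i = t - x i := by
  simp [reflect]

lemma reflect_apply_of_ne {i k : Fin d} (t : ℕ) (x : Torus d L) (h : k ≠ i) :
    reflect i t x k = x k :=
  Function.update_of_ne h _ _

lemma reflect_involutive (i : Fin d) (t : ℕ) : Function.Involutive (reflect (L := L) i t) := by
  intro x
  ext k
  rcases eq_or_ne k i with rfl | h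
  · simp
  · simp only [reflect_apply_of_ne _ _ h]

variable [NeZero L]

lemma mem_posHalf_one {i : Fin d} {x : Torus d L} :
    x ∈ posHalf d L i 1 ↔ (x i - 1).val < L / 2 := by
  simp [posHalf]

lemma reflect_mem_posHalf_one (hL : Even L) {i : Fin d} {x : Torus d L} :
    reflect i 1 x ∈ posHalf d L i 1 ↔ x ∉ posHalf d L i 1 := by
  obtain ⟨K, rfl⟩ := hL
  rw [mem_posHalf_one, mem_posHalf_one, reflect_apply_self, Nat.cast_one,
    show (1 : ZMod (K + K)) - x i - 1 = -1 - (x i - 1) by ring, val_neg_one_sub]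
  have := ZMod.val_lt (x i - 1)
  omega

lemma image_reflect_posHalf_one (hL : Even L) (i : Fin d) :
    (posHalf d L i 1).image (reflect i 1) = (posHalf d L i 1)ᶜ := by
  ext x
  rw [Finset.mem_compl, ← reflect_mem_posHalf_one hL, Finset.mem_image]
  exact ⟨fun ⟨y, hy, hyx⟩ => hyx ▸ (reflect_involutive i 1 y).symm ▸ hy,
    fun hx => ⟨_, hx, reflect_involutive i 1 x⟩⟩

end Reflection

section Slabs

variable {d L : ℕ}

/-- Layer `i` of the half space `posHalf d L j 1` is `x j = 1 + i`; the reflection pairs layers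
`i` and `i'` into the slab `x j = -(1 + (i + i'))` (`reflect_layerPoint_sub`). -/
def layerPoint (j : Fin d) (i : ℕ) (p : Torus d L) : Torus d L :=
  Function.update p j ((1 + i : ℕ) : ZMod L)

def slabPoint (j : Fin d) (σ : ℕ) (w : Torus d L) : Torus d L :=
  Function.update w j (-((1 + σ : ℕ) : ZMod L))

def slabSum (g : Torus d L → ℝ) (Λ : Finset (Torus d L)) (j : Fin d) (σ : ℕ) : ℝ :=
  ∑ r ∈ Λ, g (slabPoint j σ r)

@[simp] lemma slabPoint_apply_self (j : Fin d) (σ : ℕ) (w : Torus d L) :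
    slabPoint j σ w j = -((1 + σ : ℕ) : ZMod L) := by
  simp [slabPoint]

lemma slabPoint_apply_of_ne {j k : Fin d} (σ : ℕ) (w : Torus d L) (h : k ≠ j) :
    slabPoint j σ w k = w k :=
  Function.update_of_ne h _ _

lemma slabPoint_eq_self {j : Fin d} {σ : ℕ} {w : Torus d L}
    (h : -((1 + σ : ℕ) : ZMod L) = w j) : slabPoint j σ w = w := by
  rw [slabPoint, h, Function.update_eq_self]

lemma slabPoint_update (j : Fin d) (σ : ℕ) (x : Torus d L) (c : ZMod L) :
    slabPoint j σ (Function.update x j c) = slabPoint j σ x := by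
  simp only [slabPoint, Function.update_idem]

lemma reflect_layerPoint_sub (j : Fin d) (i i' : ℕ) (p q : Torus d L) :
    reflect j 1 (layerPoint j i' q) - layerPoint j i p = slabPoint j (i + i') (q - p) := by
  ext k
  rcases eq_or_ne k j with rfl | hk
  · simp only [Pi.sub_apply, reflect_apply_self, layerPoint, slabPoint, Function.update_self]
    push_cast
    ring
  · simp only [Pi.sub_apply, reflect_apply_of_ne _ _ hk, layerPoint, slabPoint,
      Function.update_of_ne hk]

lemma slabSum_const_sub (M : ℝ) (g : Torus d L → ℝ) (Λ : Finset (Torus d L)) (j : Fin d)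
    (σ : ℕ) : slabSum (fun y => M - g y) Λ j σ = #Λ * M - slabSum g Λ j σ := by
  simp only [slabSum, Finset.sum_sub_distrib, Finset.sum_const, nsmul_eq_mul]

lemma neg_slabPoint {σ : ℕ} (hσ : σ + 2 ≤ L) (j : Fin d) (w : Torus d L) :
    -slabPoint j σ w = slabPoint j (L - 2 - σ) (-w) := by
  ext k
  rcases eq_or_ne k j with rfl | hk
  · rw [Pi.neg_apply, slabPoint_apply_self, slabPoint_apply_self, neg_neg,
      show 1 + (L - 2 - σ) = L - (1 + σ) by omega, Nat.cast_sub (by omega), ZMod.natCast_self,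
      zero_sub, neg_neg]
  · simp only [Pi.neg_apply, slabPoint_apply_of_ne _ _ hk]

lemma exists_add_eq_of_add_two_le (hL : Even L) {σ : ℕ} (hσ : σ + 2 ≤ L) :
    ∃ i i', i + i' = σ ∧ i < L / 2 ∧ i' < L / 2 :=
  ⟨σ / 2, σ - σ / 2, by omega, by obtain ⟨K, rfl⟩ := hL; omega, by obtain ⟨K, rfl⟩ := hL; omega⟩

variable [NeZero L]

lemma val_slabPoint_apply_self {σ : ℕ} (hσ : σ + 2 ≤ L) (j : Fin d)
    (w : Torus d L) : (slabPoint j σ w j).val = L - 1 - σ := by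
  have h : ((1 + σ : ℕ) : ZMod L).val = 1 + σ := ZMod.val_natCast_of_lt (by omega)
  rw [slabPoint_apply_self, ← natCast_sub_val, h, ZMod.val_natCast_of_lt (by omega)]
  omega

lemma layerPoint_mem_posHalf {j : Fin d} {i : ℕ} (hi : i < L / 2) (p : Torus d L) :
    layerPoint j i p ∈ posHalf d L j 1 := by
  rw [mem_posHalf_one, layerPoint, Function.update_self, Nat.cast_add, Nat.cast_one,
    add_sub_cancel_left, ZMod.val_natCast_of_lt (by omega)]
  exact hi

/-- Slabs over `Λ ⊆ {r | r j = 0}` at distinct levels `σ ≤ L - 2` are disjoint. -/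
lemma sum_slabSum_le {h : Torus d L → ℝ} (hh : ∀ y, 0 ≤ h y) {Λ : Finset (Torus d L)} {j : Fin d}
    (hΛj : ∀ r ∈ Λ, r j = 0) {ι : Type*} (F : Finset ι) (σ : ι → ℕ) (hσ : Set.InjOn σ F)
    (hσL : ∀ a ∈ F, σ a + 2 ≤ L) {T : Finset (Torus d L)}
    (hT : ∀ a ∈ F, ∀ r ∈ Λ, slabPoint j (σ a) r ∈ T) :
    ∑ a ∈ F, slabSum h Λ j (σ a) ≤ ∑ y ∈ T, h y := by
  let ψ : ι × Torus d L → Torus d L := fun p => slabPoint j (σ p.1) p.2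
  have hψ : Set.InjOn ψ ↑(F ×ˢ Λ) := by
    rintro ⟨a, r⟩ har ⟨a', r'⟩ har' e
    simp only [Finset.coe_product, Set.mem_prod, Finset.mem_coe] at har har'
    have hj := congrArg (fun y => (y j).val) e
    simp only [ψ, val_slabPoint_apply_self (hσL a har.1),
      val_slabPoint_apply_self (hσL a' har'.1)] at hj
    obtain rfl : a = a' := hσ har.1 har'.1 (by have := hσL a har.1; have := hσL a' har'.1; omega)
    refine Prod.ext rfl (funext fun k => ?_)
    rcases eq_or_ne k j with rfl | hk
    · exact (hΛj r har.2).trans (hΛj r' har'.2).symm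
    · simpa only [ψ, slabPoint_apply_of_ne _ _ hk] using congrFun e k
  calc ∑ a ∈ F, slabSum h Λ j (σ a) = ∑ p ∈ F ×ˢ Λ, h (ψ p) := by
        rw [Finset.sum_product]
        rfl
    _ = ∑ y ∈ (F ×ˢ Λ).image ψ, h y := (Finset.sum_image hψ).symm
    _ ≤ ∑ y ∈ T, h y := by
        refine Finset.sum_le_sum_of_subset_of_nonneg ?_ fun y _ _ => hh y
        simp only [Finset.image_subset_iff, Finset.mem_product]
        exact fun p hp => hT p.1 hp.1 p.2 hp.2

end Slabs

section Sublattice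

variable {d L : ℕ}

def sublattice (j : Fin d) (E : Finset (ZMod L)) : Finset (Torus d L) :=
  Fintype.piFinset (Function.update (fun _ => E) j {0})

variable {j : Fin d} {E : Finset (ZMod L)}

lemma mem_sublattice {r : Torus d L} : r ∈ sublattice j E ↔ r j = 0 ∧ ∀ k ≠ j, r k ∈ E := by
  simp only [sublattice, Fintype.mem_piFinset]
  constructor
  · intro h
    exact ⟨by simpa using h j, fun k hk => by simpa [Function.update_of_ne hk] using h k⟩
  · rintro ⟨h0, hE⟩ k
    rcases eq_or_ne k j with rfl | hk
    · simpa using h0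
    · simpa [Function.update_of_ne hk] using hE k hk

lemma sub_mem_sublattice (hE : ∀ a ∈ E, ∀ b ∈ E, a - b ∈ E) :
    ∀ r ∈ sublattice j E, ∀ s ∈ sublattice j E, r - s ∈ sublattice j E := by
  simp only [mem_sublattice]
  exact fun r ⟨hr, hrE⟩ s ⟨hs, hsE⟩ =>
    ⟨by simp [hr, hs], fun k hk => hE _ (hrE k hk) _ (hsE k hk)⟩

lemma zero_mem_sublattice (hE : 0 ∈ E) : 0 ∈ sublattice j E :=
  mem_sublattice.mpr ⟨rfl, fun _ _ => hE⟩

lemma card_update_apply (i : Fin d) :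
    #(Function.update (fun _ => E) j {0} i) = Function.update (fun _ => #E) j 1 i := by
  rcases eq_or_ne i j with rfl | hi
  · simp
  · simp [Function.update_of_ne hi]

lemma card_sublattice : #(sublattice j E) = #E ^ (d - 1) := by
  simp only [sublattice, Fintype.card_piFinset, card_update_apply,
    Finset.prod_update_of_mem (Finset.mem_univ j), Finset.prod_const, one_mul]
  rw [Finset.card_sdiff]
  simp

lemma sum_sublattice_apply {k : Fin d} (hkj : k ≠ j) (g : ZMod L → ℝ) :
    ∑ r ∈ sublattice j E, g (r k) = #E ^ (d - 2) * ∑ c ∈ E, g c := by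
  rw [sublattice, sum_piFinset_apply_eq, Function.update_of_ne hkj]
  simp only [card_update_apply,
    Finset.prod_update_of_mem (Finset.mem_erase.mpr ⟨hkj.symm, Finset.mem_univ j⟩),
    Finset.prod_const, one_mul, Nat.cast_pow]
  rw [Finset.card_sdiff]
  simp [Finset.card_erase_of_mem, hkj.symm, Nat.sub_sub]

variable [NeZero L]

def oddCoords (y : Torus d L) : Finset (Fin d) :=
  Finset.univ.filter fun i => (y i).val % 2 = 1

lemma oddCoords_slabPoint (hL : Even L) {j : Fin d} {σ : ℕ} (hσ : σ + 2 ≤ L) {r : Torus d L}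
    (hr : ∀ k ≠ j, (r k).val % 2 = 0) :
    oddCoords (slabPoint j σ r) = if σ % 2 = 0 then {j} else ∅ := by
  obtain ⟨K, rfl⟩ := hL
  ext k
  simp only [oddCoords, Finset.mem_filter, Finset.mem_univ, true_and]
  rcases eq_or_ne k j with rfl | hk
  · rw [val_slabPoint_apply_self hσ]
    split_ifs <;> simp only [Finset.mem_singleton, Finset.notMem_empty, iff_true, iff_false] <;>
      omega
  · have := hr k hk
    rw [slabPoint_apply_of_ne _ _ hk]
    split_ifs <;> simp only [Finset.mem_singleton, hk, Finset.notMem_empty, iff_false] <;> omega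

lemma sum_oddCoords_le {h : Torus d L → ℝ} (hh : ∀ y, 0 ≤ h y) (S : Finset (Finset (Fin d))) :
    ∑ s ∈ S, ∑ y with oddCoords y = s, h y ≤ ∑ y, h y :=
  calc ∑ s ∈ S, ∑ y with oddCoords y = s, h y ≤ ∑ s, ∑ y with oddCoords y = s, h y :=
        Finset.sum_le_sum_of_subset_of_nonneg (Finset.subset_univ S)
          fun _ _ _ => Finset.sum_nonneg fun y _ => hh y
    _ = ∑ y, h y := Finset.sum_fiberwise _ _ _

lemma sum_slabSum_evens_le (hL : Even L) {g : Torus d L → ℝ}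
    (hg : ∀ y, 0 ≤ g y) (k : Fin d) {e : ℕ} (he : e ≤ 2) :
    ∑ c ∈ (evens L).erase 0, slabSum g (sublattice k (evens L)) k (L - c.val - e) ≤
      ∑ y with oddCoords y = (if e % 2 = 0 then {k} else ∅), g y := by
  have hval : ∀ c ∈ (evens L).erase 0, 2 ≤ c.val ∧ c.val % 2 = 0 ∧ c.val < L := by
    intro c hc
    obtain ⟨hc0, hc⟩ := Finset.mem_erase.mp hc
    have := (mem_evens hL).mp hc
    have : c.val ≠ 0 := by rwa [ne_eq, ZMod.val_eq_zero]
    exact ⟨by omega, by omega, ZMod.val_lt c⟩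
  obtain ⟨K, hK⟩ := id hL
  refine sum_slabSum_le hg (fun r hr => (mem_sublattice.mp hr).1) _ _ (fun a ha b hb hab => ?_)
    (fun c hc => ?_) fun c hc r hr => ?_
  · have := hval a ha
    have := hval b hb
    exact ZMod.val_injective L (by omega)
  · have := hval c hc
    omega
  · have := hval c hc
    rw [Finset.mem_filter, oddCoords_slabPoint hL (by omega)
      fun i hi => (mem_evens hL).mp ((mem_sublattice.mp hr).2 i hi),
      show (L - c.val - e) % 2 = e % 2 by omega]
    exact ⟨Finset.mem_univ _, rfl⟩

end Sublattice

section ReflectionPositivity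

variable {d L : ℕ} {Sig : Type*}

def rpForm (phi : (MState d L Sig → ℝ) →ₗ[ℝ] ℝ) (j : Fin d) :
    LinearMap.BilinForm ℝ (MState d L Sig → ℝ) :=
  LinearMap.mk₂ ℝ (fun A B => phi (A * reflectFun j 1 B))
    (fun A A' B => by rw [add_mul, map_add])
    (fun c A B => by rw [smul_mul_assoc, map_smul, smul_eq_mul])
    (fun A B B' => by
      rw [show reflectFun j 1 (B + B') = reflectFun j 1 B + reflectFun j 1 B' from rfl, mul_add,
        map_add])
    (fun c A B => by
      rw [show reflectFun j 1 (c • B) = c • reflectFun j 1 B from rfl, mul_smul_comm, map_smul,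
        smul_eq_mul])

lemma rpForm_apply (phi : (MState d L Sig → ℝ) →ₗ[ℝ] ℝ) (j : Fin d) (A B : MState d L Sig → ℝ) :
    rpForm phi j A B = phi (A * reflectFun j 1 B) := rfl

variable [NeZero L] (f1 f2 : Sig → ℝ)

noncomputable def halfProduct (j : Fin d) (w : Torus d L) : MState d L Sig → ℝ :=
  site f2 w * ∏ z ∈ (posHalf d L j 1).erase w, site f1 z

lemma halfProduct_apply (j : Fin d) (w : Torus d L) (ω : MState d L Sig) :
    halfProduct f1 f2 j w ω = f2 (ω w) * ∏ z ∈ (posHalf d L j 1).erase w, f1 (ω z) := by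
  simp [halfProduct, site, Finset.prod_apply]

lemma hasDomain_halfProduct {j : Fin d} {w : Torus d L} (hw : w ∈ posHalf d L j 1) :
    HasDomain (halfProduct f1 f2 j w) ↑(posHalf d L j 1) := by
  intro ω₁ ω₂ h
  simp only [halfProduct_apply, h w hw]
  congr 1
  exact Finset.prod_congr rfl fun z hz => by rw [h z (Finset.mem_of_mem_erase hz)]

lemma halfProduct_mul_reflectFun (hL : Even L) {j : Fin d} {u v : Torus d L}
    (hu : u ∈ posHalf d L j 1) (hv : v ∈ posHalf d L j 1) :
    halfProduct f1 f2 j u * reflectFun j 1 (halfProduct f1 f2 j v) =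
      fun ω => f2 (ω u) * f2 (ω (reflect j 1 v)) *
        ∏ z ∈ (Finset.univ.erase u).erase (reflect j 1 v), f1 (ω z) := by
  have hθv : reflect j 1 v ∉ posHalf d L j 1 := fun h => (reflect_mem_posHalf_one hL).mp h hv
  have hreindex (g : Torus d L → ℝ) :
      ∏ z ∈ (posHalf d L j 1).erase v, g (reflect j 1 z) =
        ∏ z ∈ (posHalf d L j 1)ᶜ.erase (reflect j 1 v), g z := by
    rw [← image_reflect_posHalf_one hL, ← Finset.image_erase (reflect_involutive j 1).injective,
      Finset.prod_image fun a _ b _ h => (reflect_involutive j 1).injective h]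
  funext ω
  simp only [Pi.mul_apply, reflectFun, halfProduct_apply]
  rw [hreindex fun z => f1 (ω z), prod_univ_erase_erase_eq_mul hu hθv fun z => f1 (ω z)]
  ring

def rpSpace (AL : Subalgebra ℝ (MState d L Sig → ℝ)) (j : Fin d) :
    Submodule ℝ (MState d L Sig → ℝ) where
  carrier := {A | A ∈ AL ∧ HasDomain A ↑(posHalf d L j 1)}
  add_mem' := fun ⟨ha, hA⟩ ⟨hb, hB⟩ =>
    ⟨add_mem ha hb, fun ω₁ ω₂ h => by simp only [Pi.add_apply, hA ω₁ ω₂ h, hB ω₁ ω₂ h]⟩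
  zero_mem' := ⟨zero_mem _, fun _ _ _ => rfl⟩
  smul_mem' := fun c _ ⟨ha, hA⟩ =>
    ⟨Subalgebra.smul_mem _ ha c, fun ω₁ ω₂ h => by simp only [Pi.smul_apply, hA ω₁ ω₂ h]⟩

variable {AL : Subalgebra ℝ (MState d L Sig → ℝ)} {phi : (MState d L Sig → ℝ) →ₗ[ℝ] ℝ}
  {j : Fin d}

lemma halfProduct_mem_rpSpace (hF1 : ∀ x : Torus d L, site f1 x ∈ AL)
    (hF2 : ∀ x : Torus d L, site f2 x ∈ AL) {w : Torus d L} (hw : w ∈ posHalf d L j 1) :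
    halfProduct f1 f2 j w ∈ rpSpace AL j :=
  ⟨mul_mem (hF2 w) (prod_mem fun z _ => hF1 z), hasDomain_halfProduct f1 f2 hw⟩

lemma rpForm_halfProduct (hL : Even L) {u v : Torus d L}
    (hu : u ∈ posHalf d L j 1) (hv : v ∈ posHalf d L j 1) :
    rpForm phi j (halfProduct f1 f2 j u) (halfProduct f1 f2 j v) =
      twoPoint phi f1 f2 u (reflect j 1 v) := by
  rw [rpForm_apply, halfProduct_mul_reflectFun f1 f2 hL hu hv, twoPoint]

variable {f1 f2}

lemma rpForm_self_nonneg (hRP : IsRP AL phi j 1) {A : MState d L Sig → ℝ}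
    (hA : A ∈ rpSpace AL j) : 0 ≤ rpForm phi j A A :=
  (hRP A A hA.1 hA.1 hA.2 hA.2).2

lemma rpForm_comm (hRP : IsRP AL phi j 1) {A B : MState d L Sig → ℝ}
    (hA : A ∈ rpSpace AL j) (hB : B ∈ rpSpace AL j) : rpForm phi j A B = rpForm phi j B A :=
  (hRP A B hA.1 hB.1 hA.2 hB.2).1

lemma rpForm_sq_le (hRP : IsRP AL phi j 1) {A B : MState d L Sig → ℝ}
    (hA : A ∈ rpSpace AL j) (hB : B ∈ rpSpace AL j) :
    rpForm phi j A B ^ 2 ≤ rpForm phi j A A * rpForm phi j B B :=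
  ((rpForm phi j).restrict (rpSpace AL j)).apply_sq_le_of_symm
    (fun X => rpForm_self_nonneg hRP X.2) ⟨fun X Y => rpForm_comm hRP X.2 Y.2⟩ ⟨A, hA⟩ ⟨B, hB⟩

/-- Under the hypotheses, `0 ≤ ⟪a - t b, a - t b⟫ = t ^ 2 ⟪b, b⟫ - ⟪a, a⟫`. -/
lemma rpForm_self_le_sq_mul (hRP : IsRP AL phi j 1) {a b : MState d L Sig → ℝ}
    (ha : a ∈ rpSpace AL j) (hb : b ∈ rpSpace AL j) {t : ℝ}
    (hab : t * rpForm phi j a b = rpForm phi j a a)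
    (hba : t * rpForm phi j b a = rpForm phi j a a) :
    rpForm phi j a a ≤ t ^ 2 * rpForm phi j b b := by
  have h := rpForm_self_nonneg hRP (sub_mem ha (Submodule.smul_mem _ t hb))
  simp only [map_sub, map_smul, LinearMap.sub_apply, LinearMap.smul_apply, smul_eq_mul] at h
  nlinarith

end ReflectionPositivity

section Translation

variable {d L : ℕ} [NeZero L] {Sig : Type*} (phi : (MState d L Sig → ℝ) →ₗ[ℝ] ℝ)
  (f1 f2 : Sig → ℝ)

lemma twoPoint_comm (x y : Torus d L) : twoPoint phi f1 f2 x y = twoPoint phi f1 f2 y x := by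
  unfold twoPoint
  rw [Finset.erase_right_comm]
  congr 1
  funext ω
  ring

lemma twoPoint_eq_prod {x y : Torus d L} (hxy : x ≠ y) :
    twoPoint phi f1 f2 x y = phi (fun ω => (∏ a ∈ (Finset.univ.erase x).erase y, f1 (ω a)) *
      ∏ b ∈ {x, y}, f2 (ω b)) := by
  unfold twoPoint
  congr 1
  funext ω
  rw [Finset.prod_pair hxy]
  ring

variable {phi f1 f2}

lemma twoPoint_add_right (hsym : TorusSymmetric phi f1 f2) {x y : Torus d L} (hxy : x ≠ y)
    (z : Torus d L) : twoPoint phi f1 f2 (x + z) (y + z) = twoPoint phi f1 f2 x y := by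
  let τ := (Equiv.addRight z).toEmbedding
  have h1 : ((Finset.univ.erase x).erase y).map τ = (Finset.univ.erase (x + z)).erase (y + z) := by
    simp [τ, Finset.map_erase]
  have h2 : ({x, y} : Finset (Torus d L)).map τ = {x + z, y + z} := by simp [τ]
  rw [twoPoint_eq_prod phi f1 f2 hxy, hsym _ _ z, twoPoint_eq_prod phi f1 f2 (by simpa using hxy),
    ← h1, ← h2]
  simp only [Finset.prod_map]
  rfl

lemma twoPoint_eq_zero_sub (hsym : TorusSymmetric phi f1 f2) {x y : Torus d L} (hxy : x ≠ y) :
    twoPoint phi f1 f2 x y = twoPoint phi f1 f2 0 (y - x) := by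
  rw [← twoPoint_add_right hsym hxy (-x), add_neg_cancel, sub_eq_add_neg]

lemma twoPoint_zero_neg (hsym : TorusSymmetric phi f1 f2) (z : Torus d L) :
    twoPoint phi f1 f2 0 (-z) = twoPoint phi f1 f2 0 z := by
  rcases eq_or_ne z 0 with rfl | hz
  · rw [neg_zero]
  · rw [twoPoint_comm, twoPoint_eq_zero_sub hsym (neg_ne_zero.mpr hz), zero_sub, neg_neg]

end Translation

structure RPModel {d L : ℕ} [NeZero L] {Sig : Type*} (AL : Subalgebra ℝ (MState d L Sig → ℝ))
    (phi : (MState d L Sig → ℝ) →ₗ[ℝ] ℝ) (f1 f2 : Sig → ℝ) : Prop where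
  even : Even L
  rpEdges : RPEdges AL phi
  site_mem₁ : ∀ x : Torus d L, site f1 x ∈ AL
  site_mem₂ : ∀ x : Torus d L, site f2 x ∈ AL
  torusSymmetric : TorusSymmetric phi f1 f2

noncomputable def layerSum {d L : ℕ} [NeZero L] {Sig : Type*} (f1 f2 : Sig → ℝ)
    (Λ : Finset (Torus d L)) (j : Fin d) (i : ℕ) : MState d L Sig → ℝ :=
  ∑ r ∈ Λ, halfProduct f1 f2 j (layerPoint j i r)

namespace RPModel

variable {d L : ℕ} [NeZero L] {Sig : Type*} {AL : Subalgebra ℝ (MState d L Sig → ℝ)}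
  {phi : (MState d L Sig → ℝ) →ₗ[ℝ] ℝ} {f1 f2 : Sig → ℝ} {j : Fin d} {i i' : ℕ}
  {Λ : Finset (Torus d L)} {M : ℝ}

lemma isRP (h : RPModel AL phi f1 f2) (j : Fin d) : IsRP AL phi j 1 :=
  h.rpEdges j 1 (by have := NeZero.pos L; omega) rfl

lemma layer_mem_rpSpace (h : RPModel AL phi f1 f2) (hi : i < L / 2) (p : Torus d L) :
    halfProduct f1 f2 j (layerPoint j i p) ∈ rpSpace AL j :=
  halfProduct_mem_rpSpace f1 f2 h.site_mem₁ h.site_mem₂ (layerPoint_mem_posHalf hi p)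

lemma rpForm_layer (h : RPModel AL phi f1 f2) (hi : i < L / 2) (hi' : i' < L / 2)
    (p q : Torus d L) :
    rpForm phi j (halfProduct f1 f2 j (layerPoint j i p))
        (halfProduct f1 f2 j (layerPoint j i' q)) =
      twoPoint phi f1 f2 0 (slabPoint j (i + i') (q - p)) := by
  have hu := layerPoint_mem_posHalf (j := j) hi p
  have hv := layerPoint_mem_posHalf (j := j) hi' q
  have hne : layerPoint j i p ≠ reflect j 1 (layerPoint j i' q) :=
    fun e => (reflect_mem_posHalf_one h.even).mp (e ▸ hu) hv
  rw [rpForm_halfProduct f1 f2 h.even hu hv, twoPoint_eq_zero_sub h.torusSymmetric hne,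
    reflect_layerPoint_sub]

lemma twoPoint_slabPoint_neg (h : RPModel AL phi f1 f2) {σ : ℕ} (hσ : σ + 2 ≤ L) (j : Fin d)
    (w : Torus d L) :
    twoPoint phi f1 f2 0 (slabPoint j σ (-w)) = twoPoint phi f1 f2 0 (slabPoint j σ w) := by
  obtain ⟨i, i', rfl, hi, hi'⟩ := exists_add_eq_of_add_two_le h.even hσ
  have := rpForm_comm (h.isRP j) (h.layer_mem_rpSpace hi w) (h.layer_mem_rpSpace hi' 0)
  rwa [h.rpForm_layer hi hi', h.rpForm_layer hi' hi, zero_sub, sub_zero, add_comm i'] at this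

lemma neg_le_twoPoint (h : RPModel AL phi f1 f2)
    (hbd : ∀ x y : Torus d L, twoPoint phi f1 f2 x y ≤ M) {z : Torus d L} (hz : z j ≠ 0) :
    -M ≤ twoPoint phi f1 f2 0 z := by
  have hzv : (z j).val ≠ 0 := by rwa [ne_eq, ZMod.val_eq_zero]
  have hσ : L - 1 - (z j).val + 2 ≤ L := by have := ZMod.val_lt (z j); omega
  obtain ⟨i, i', hii', hi, hi'⟩ := exists_add_eq_of_add_two_le h.even hσ
  have hz' : slabPoint j (i + i') z = z := slabPoint_eq_self <| by
    rw [hii', show 1 + (L - 1 - (z j).val) = L - (z j).val by have := ZMod.val_lt (z j); omega,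
      natCast_sub_val, neg_neg]
  have := rpForm_self_nonneg (h.isRP j)
    (add_mem (h.layer_mem_rpSpace hi 0) (h.layer_mem_rpSpace hi' z))
  simp only [map_add, LinearMap.add_apply, h.rpForm_layer hi hi, h.rpForm_layer hi hi',
    h.rpForm_layer hi' hi, h.rpForm_layer hi' hi', sub_zero, zero_sub, sub_self] at this
  rw [add_comm i' i, h.twoPoint_slabPoint_neg (hii' ▸ hσ), hz'] at this
  linarith [hbd 0 (slabPoint j (i + i) 0), hbd 0 (slabPoint j (i' + i') 0)]

lemma layerSum_mem_rpSpace (h : RPModel AL phi f1 f2) (hi : i < L / 2) :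
    layerSum f1 f2 Λ j i ∈ rpSpace AL j :=
  Submodule.sum_mem _ fun r _ => h.layer_mem_rpSpace hi r

lemma rpForm_layerSum_layer (h : RPModel AL phi f1 f2) (hΛ : ∀ r ∈ Λ, ∀ s ∈ Λ, r - s ∈ Λ)
    (hi : i < L / 2) (hi' : i' < L / 2) {v : Torus d L} (hv : v ∈ Λ) :
    rpForm phi j (layerSum f1 f2 Λ j i) (halfProduct f1 f2 j (layerPoint j i' v)) =
      slabSum (twoPoint phi f1 f2 0) Λ j (i + i') := by
  simp only [layerSum, map_sum, LinearMap.sum_apply, h.rpForm_layer hi hi', slabSum]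
  exact sum_sub_left hΛ hv fun r => twoPoint phi f1 f2 0 (slabPoint j (i + i') r)

lemma rpForm_layer_layerSum (h : RPModel AL phi f1 f2) (hΛ : ∀ r ∈ Λ, ∀ s ∈ Λ, r - s ∈ Λ)
    (hi : i < L / 2) (hi' : i' < L / 2) {u : Torus d L} (hu : u ∈ Λ) :
    rpForm phi j (halfProduct f1 f2 j (layerPoint j i u)) (layerSum f1 f2 Λ j i') =
      slabSum (twoPoint phi f1 f2 0) Λ j (i + i') := by
  simp only [layerSum, map_sum, h.rpForm_layer hi hi', slabSum]
  exact sum_sub_right hΛ hu fun r => twoPoint phi f1 f2 0 (slabPoint j (i + i') r)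

lemma rpForm_layerSum (h : RPModel AL phi f1 f2) (hΛ : ∀ r ∈ Λ, ∀ s ∈ Λ, r - s ∈ Λ)
    (hi : i < L / 2) (hi' : i' < L / 2) :
    rpForm phi j (layerSum f1 f2 Λ j i) (layerSum f1 f2 Λ j i') =
      #Λ * slabSum (twoPoint phi f1 f2 0) Λ j (i + i') := by
  rw [layerSum, map_sum, LinearMap.sum_apply,
    Finset.sum_congr rfl fun r hr => h.rpForm_layer_layerSum hΛ hi hi' hr, Finset.sum_const,
    nsmul_eq_mul]

lemma slabSum_nonneg (h : RPModel AL phi f1 f2) (hΛ : ∀ r ∈ Λ, ∀ s ∈ Λ, r - s ∈ Λ)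
    (h0 : 0 ∈ Λ) (hi : i < L / 2) : 0 ≤ slabSum (twoPoint phi f1 f2 0) Λ j (i + i) := by
  have := rpForm_self_nonneg (h.isRP j) (h.layerSum_mem_rpSpace (Λ := Λ) hi)
  rw [h.rpForm_layerSum hΛ hi hi] at this
  exact nonneg_of_mul_nonneg_right this (by exact_mod_cast Finset.card_pos.mpr ⟨0, h0⟩)

lemma slabSum_sq_le (h : RPModel AL phi f1 f2) (hΛ : ∀ r ∈ Λ, ∀ s ∈ Λ, r - s ∈ Λ)
    (h0 : 0 ∈ Λ) (hi : i < L / 2) (hi' : i' < L / 2) :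
    slabSum (twoPoint phi f1 f2 0) Λ j (i + i') ^ 2 ≤
      slabSum (twoPoint phi f1 f2 0) Λ j (i + i) *
        slabSum (twoPoint phi f1 f2 0) Λ j (i' + i') := by
  have := rpForm_sq_le (h.isRP j) (h.layerSum_mem_rpSpace (Λ := Λ) hi)
    (h.layerSum_mem_rpSpace (Λ := Λ) hi')
  rw [h.rpForm_layerSum hΛ hi hi', h.rpForm_layerSum hΛ hi hi, h.rpForm_layerSum hΛ hi' hi'] at this
  have hc : (0 : ℝ) < #Λ ^ 2 := by
    have : (0 : ℝ) < #Λ := by exact_mod_cast Finset.card_pos.mpr ⟨0, h0⟩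
    positivity
  exact le_of_mul_le_mul_left (by linarith) hc

/-- Apply `rpForm_self_le_sq_mul` to `a = layerSum i + layerSum i'`, `b = e i 0 + e i' w` and
`t = #Λ`, where `e i p` is the half-space product at `layerPoint j i p`. -/
lemma slabSum_add_le (h : RPModel AL phi f1 f2) (hΛ : ∀ r ∈ Λ, ∀ s ∈ Λ, r - s ∈ Λ)
    (h0 : 0 ∈ Λ) {w : Torus d L} (hw : w ∈ Λ) (hi : i < L / 2) (hi' : i' < L / 2) :
    slabSum (twoPoint phi f1 f2 0) Λ j (i + i) + slabSum (twoPoint phi f1 f2 0) Λ j (i' + i') +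
        2 * slabSum (twoPoint phi f1 f2 0) Λ j (i + i') ≤
      #Λ * (twoPoint phi f1 f2 0 (slabPoint j (i + i) 0) +
        twoPoint phi f1 f2 0 (slabPoint j (i' + i') 0) +
        2 * twoPoint phi f1 f2 0 (slabPoint j (i + i') w)) := by
  have hσ : i + i' + 2 ≤ L := by obtain ⟨K, rfl⟩ := h.even; omega
  have hc : (0 : ℝ) < #Λ := by exact_mod_cast Finset.card_pos.mpr ⟨0, h0⟩
  have ha := add_mem (h.layerSum_mem_rpSpace (Λ := Λ) (j := j) hi)
    (h.layerSum_mem_rpSpace (Λ := Λ) hi')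
  have hb := add_mem (h.layer_mem_rpSpace (j := j) hi 0) (h.layer_mem_rpSpace hi' w)
  have key := rpForm_self_le_sq_mul (h.isRP j) ha hb (t := #Λ) ?_ ?_
  · simp only [map_add, LinearMap.add_apply, h.rpForm_layerSum hΛ, h.rpForm_layer, hi, hi',
      sub_zero, zero_sub, sub_self, add_comm i' i, h.twoPoint_slabPoint_neg hσ] at key
    nlinarith
  all_goals simp only [map_add, LinearMap.add_apply, h.rpForm_layerSum hΛ,
    h.rpForm_layerSum_layer hΛ, h.rpForm_layer_layerSum hΛ, hi, hi', h0, hw, add_comm i' i]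
  all_goals ring

lemma slabSum_reflect (h : RPModel AL phi f1 f2) (hΛ : ∀ r ∈ Λ, ∀ s ∈ Λ, r - s ∈ Λ)
    (h0 : 0 ∈ Λ) {σ : ℕ} (hσ : σ + 2 ≤ L) :
    slabSum (twoPoint phi f1 f2 0) Λ j (L - 2 - σ) = slabSum (twoPoint phi f1 f2 0) Λ j σ := by
  unfold slabSum
  calc ∑ r ∈ Λ, twoPoint phi f1 f2 0 (slabPoint j (L - 2 - σ) r)
      = ∑ r ∈ Λ, twoPoint phi f1 f2 0 (slabPoint j (L - 2 - σ) (-r)) :=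
        (sum_neg hΛ h0 fun r => twoPoint phi f1 f2 0 (slabPoint j (L - 2 - σ) r)).symm
    _ = ∑ r ∈ Λ, twoPoint phi f1 f2 0 (slabPoint j σ r) := by
        simp only [← neg_slabPoint hσ, twoPoint_zero_neg h.torusSymmetric]

lemma slabSum_le_of_le (h : RPModel AL phi f1 f2) (hΛ : ∀ r ∈ Λ, ∀ s ∈ Λ, r - s ∈ Λ)
    (h0 : 0 ∈ Λ) {i₀ i : ℕ} (hi₀ : i₀ ≤ i) (hi : i + i₀ + 1 ≤ L / 2) :
    slabSum (twoPoint phi f1 f2 0) Λ j (i + i) ≤ slabSum (twoPoint phi f1 f2 0) Λ j (i₀ + i₀) := by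
  obtain ⟨K, hK⟩ := h.even
  have hK2 : L / 2 = K := by omega
  refine le_of_sq_le_mul_of_eq (f := fun m => slabSum (twoPoint phi f1 f2 0) Λ j (m + m))
    (b := K - 1 - i₀) (by omega) (fun m _ hm => h.slabSum_nonneg hΛ h0 (by omega))
    (fun m hm hm' => ?_) ?_ hi₀ (by omega)
  · have := h.slabSum_sq_le (j := j) hΛ h0 (i := m - 1) (i' := m + 1) (by omega) (by omega)
    rwa [show m - 1 + (m + 1) = m + m by omega] at this
  · rw [show K - 1 - i₀ + (K - 1 - i₀) = L - 2 - (i₀ + i₀) by omega]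
    exact h.slabSum_reflect hΛ h0 (by omega)

lemma deficit_le_slabSum (h : RPModel AL phi f1 f2) (hΛ : ∀ r ∈ Λ, ∀ s ∈ Λ, r - s ∈ Λ)
    (h0 : 0 ∈ Λ) (hbd : ∀ x y : Torus d L, twoPoint phi f1 f2 x y ≤ M) {x : Torus d L}
    (hx : ((1 + (i + i') : ℕ) : ZMod L) = -x j) (hxΛ : Function.update x j 0 ∈ Λ)
    (hi : i < L / 2) (hi' : i' < L / 2) :
    2 * #Λ * (M - twoPoint phi f1 f2 0 x) ≤
      slabSum (fun y => M - twoPoint phi f1 f2 0 y) Λ j (i + i) +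
        slabSum (fun y => M - twoPoint phi f1 f2 0 y) Λ j (i' + i') +
        2 * slabSum (fun y => M - twoPoint phi f1 f2 0 y) Λ j (i + i') := by
  have key := h.slabSum_add_le (j := j) hΛ h0 hxΛ hi hi'
  rw [slabPoint_update, slabPoint_eq_self (σ := i + i') (w := x) (by rw [hx, neg_neg])] at key
  have hc : (0 : ℝ) ≤ #Λ := Nat.cast_nonneg _
  simp only [slabSum_const_sub]
  nlinarith [mul_le_mul_of_nonneg_left (hbd 0 (slabPoint j (i + i) 0)) hc,
    mul_le_mul_of_nonneg_left (hbd 0 (slabPoint j (i' + i') 0)) hc]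

/-- By `slabSum_le_of_le` each of the `L / 2 - 2 i₀` slabs at levels `i + i`,
`i₀ ≤ i < L / 2 - i₀`, has deficit at least that of level `i₀ + i₀`, and they are disjoint. -/
lemma card_mul_slabSum_le (h : RPModel AL phi f1 f2) (hΛ : ∀ r ∈ Λ, ∀ s ∈ Λ, r - s ∈ Λ)
    (h0 : 0 ∈ Λ) (hΛj : ∀ r ∈ Λ, r j = 0) (hbd : ∀ x y : Torus d L, twoPoint phi f1 f2 x y ≤ M)
    (i₀ : ℕ) {T : Finset (Torus d L)}
    (hT : ∀ i, i₀ ≤ i → i + i₀ < L / 2 → ∀ r ∈ Λ, slabPoint j (i + i) r ∈ T) :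
    ((L / 2 - 2 * i₀ : ℕ) : ℝ) * slabSum (fun y => M - twoPoint phi f1 f2 0 y) Λ j (i₀ + i₀) ≤
      ∑ y ∈ T, (M - twoPoint phi f1 f2 0 y) := by
  have hL := h.even
  calc ((L / 2 - 2 * i₀ : ℕ) : ℝ) * slabSum (fun y => M - twoPoint phi f1 f2 0 y) Λ j (i₀ + i₀)
      = ∑ _i ∈ Finset.Ico i₀ (L / 2 - i₀),
          slabSum (fun y => M - twoPoint phi f1 f2 0 y) Λ j (i₀ + i₀) := by
        rw [Finset.sum_const, Nat.card_Ico, nsmul_eq_mul, show L / 2 - i₀ - i₀ = L / 2 - 2 * i₀ by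
          omega]
    _ ≤ ∑ i ∈ Finset.Ico i₀ (L / 2 - i₀),
          slabSum (fun y => M - twoPoint phi f1 f2 0 y) Λ j (i + i) := by
        refine Finset.sum_le_sum fun i hi => ?_
        rw [Finset.mem_Ico] at hi
        simp only [slabSum_const_sub]
        linarith [h.slabSum_le_of_le (j := j) hΛ h0 hi.1 (by omega)]
    _ ≤ ∑ y ∈ T, (M - twoPoint phi f1 f2 0 y) := by
        refine sum_slabSum_le (fun y => sub_nonneg.mpr (hbd 0 y)) hΛj _ _
          (fun a _ b _ e => by omega) (fun a ha => ?_) fun a ha => ?_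
        all_goals rw [Finset.mem_Ico] at ha
        · obtain ⟨K, rfl⟩ := hL; omega
        · exact hT a ha.1 (by omega)

lemma deficit_bound_of_odd (h : RPModel AL phi f1 f2)
    (hbd : ∀ x y : Torus d L, twoPoint phi f1 f2 x y ≤ M) {x : Torus d L} {D : ℕ}
    (hDx : (D : ZMod L) = -x j) (hD : D % 2 = 1) (hDK : D ≤ L / 2) :
    ((L / 2 - D + 1 : ℕ) : ℝ) * L ^ (d - 1) * (M - twoPoint phi f1 f2 0 x) ≤
      2 * ∑ y, (M - twoPoint phi f1 f2 0 y) := by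
  have hΛ := sub_mem_sublattice (j := j) fun (a : ZMod L) _ b _ => Finset.mem_univ (a - b)
  have h0 := zero_mem_sublattice (j := j) (Finset.mem_univ (0 : ZMod L))
  have hcard : (#(sublattice j (Finset.univ : Finset (ZMod L))) : ℝ) = L ^ (d - 1) := by
    rw [card_sublattice, Finset.card_univ, ZMod.card, Nat.cast_pow]
  have hi : D / 2 < L / 2 := by omega
  have hpt := h.deficit_le_slabSum hΛ h0 hbd (i := D / 2) (i' := D / 2)
    (by rw [show 1 + (D / 2 + D / 2) = D by omega, hDx])
    (mem_sublattice.mpr ⟨by simp, fun _ _ => Finset.mem_univ _⟩) hi hi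
  have hmass := h.card_mul_slabSum_le hΛ h0 (fun r hr => (mem_sublattice.mp hr).1) hbd (D / 2)
    (T := Finset.univ) fun _ _ _ _ _ => Finset.mem_univ _
  rw [show L / 2 - 2 * (D / 2) = L / 2 - D + 1 by omega] at hmass
  rw [hcard] at hpt
  have hc : (0 : ℝ) ≤ ((L / 2 - D + 1 : ℕ) : ℝ) := Nat.cast_nonneg _
  nlinarith [mul_le_mul_of_nonneg_left hpt hc]

lemma deficit_le_of_even (h : RPModel AL phi f1 f2)
    (hbd : ∀ x y : Torus d L, twoPoint phi f1 f2 x y ≤ M) {k : Fin d} {y : Torus d L}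
    (hy : ∀ i, (y i).val % 2 = 0) (hyk : y k ≠ 0) :
    2 * ((L / 2 : ℕ) : ℝ) ^ (d - 1) * (M - twoPoint phi f1 f2 0 y) ≤
      slabSum (fun y => M - twoPoint phi f1 f2 0 y) (sublattice k (evens L)) k (L - (y k).val) +
        slabSum (fun y => M - twoPoint phi f1 f2 0 y) (sublattice k (evens L)) k
          (L - (y k).val - 2) +
        2 * slabSum (fun y => M - twoPoint phi f1 f2 0 y) (sublattice k (evens L)) k
          (L - (y k).val - 1) := by
  have hL := h.even
  obtain ⟨K, hK⟩ := id hL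
  have hb := hy k
  have hb0 : (y k).val ≠ 0 := by rwa [ne_eq, ZMod.val_eq_zero]
  have hbL := ZMod.val_lt (y k)
  have key := h.deficit_le_slabSum (sub_mem_sublattice (j := k) (sub_mem_evens hL))
    (zero_mem_sublattice (zero_mem_evens hL)) hbd (x := y)
    (i := (L - (y k).val) / 2) (i' := (L - (y k).val) / 2 - 1)
    (by rw [show 1 + ((L - (y k).val) / 2 + ((L - (y k).val) / 2 - 1)) = L - (y k).val by omega,
      natCast_sub_val])
    (mem_sublattice.mpr ⟨Function.update_self .., fun i hi => by
      rw [Function.update_of_ne hi, mem_evens hL]; exact hy i⟩) (by omega) (by omega)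
  rwa [card_sublattice, card_evens hL, Nat.cast_pow,
    show (L - (y k).val) / 2 + (L - (y k).val) / 2 = L - (y k).val by omega,
    show (L - (y k).val) / 2 - 1 + ((L - (y k).val) / 2 - 1) = L - (y k).val - 2 by omega,
    show (L - (y k).val) / 2 + ((L - (y k).val) / 2 - 1) = L - (y k).val - 1 by omega] at key

lemma deficit_slabPoint_le (h : RPModel AL phi f1 f2)
    (hbd : ∀ x y : Torus d L, twoPoint phi f1 f2 x y ≤ M) {j k : Fin d} (hjk : j ≠ k) {D : ℕ}
    (hD : D % 2 = 0) (hD2 : 2 ≤ D) (hDL : D + 2 ≤ L) {r : Torus d L}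
    (hr : r ∈ sublattice j (evens L)) :
    2 * ((L / 2 : ℕ) : ℝ) ^ (d - 1) * (M - twoPoint phi f1 f2 0 (slabPoint j (D - 1) r)) ≤
      if r k = 0 then 4 * ((L / 2 : ℕ) : ℝ) ^ (d - 1) * M else
        slabSum (fun y => M - twoPoint phi f1 f2 0 y) (sublattice k (evens L)) k
            (L - (r k).val) +
          slabSum (fun y => M - twoPoint phi f1 f2 0 y) (sublattice k (evens L)) k
            (L - (r k).val - 2) +
          2 * slabSum (fun y => M - twoPoint phi f1 f2 0 y) (sublattice k (evens L)) k
            (L - (r k).val - 1) := by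
  have hL := h.even
  have hodd := oddCoords_slabPoint hL (σ := D - 1) (by omega)
    fun i hi => (mem_evens hL).mp ((mem_sublattice.mp hr).2 i hi)
  rw [if_neg (by omega)] at hodd
  have hy (i : Fin d) : (slabPoint j (D - 1) r i).val % 2 = 0 := by
    have := Finset.filter_eq_empty_iff.mp hodd (Finset.mem_univ i)
    omega
  split_ifs with hrk
  · have hy0 : slabPoint j (D - 1) r j ≠ 0 := by
      rw [ne_eq, ← ZMod.val_eq_zero, val_slabPoint_apply_self (by omega)]
      omega
    have hN : (0 : ℝ) ≤ ((L / 2 : ℕ) : ℝ) ^ (d - 1) := by positivity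
    nlinarith [h.neg_le_twoPoint hbd hy0, hbd 0 (slabPoint j (D - 1) r)]
  · have := h.deficit_le_of_even hbd hy (k := k) (by rwa [slabPoint_apply_of_ne _ _ hjk.symm])
    rwa [slabPoint_apply_of_ne _ _ hjk.symm] at this

/-- The slab `D - 1` over the even sublattice consists of points with all coordinates even, each
bounded by `deficit_slabPoint_le` in a second direction `k`; as the `k`-th coordinate varies, the
slabs in direction `k` that occur are disjoint and lie in the parity classes `{k}` and `∅`. -/
lemma slabSum_le_of_even (h : RPModel AL phi f1 f2)
    (hbd : ∀ x y : Torus d L, twoPoint phi f1 f2 x y ≤ M) {j k : Fin d} (hjk : j ≠ k) {D : ℕ}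
    (hD : D % 2 = 0) (hD2 : 2 ≤ D) (hDL : D + 2 ≤ L) :
    2 * ((L / 2 : ℕ) : ℝ) *
        slabSum (fun y => M - twoPoint phi f1 f2 0 y) (sublattice j (evens L)) j (D - 1) ≤
      4 * ((L / 2 : ℕ) : ℝ) ^ (d - 1) * M +
        2 * ∑ y with oddCoords y = {k}, (M - twoPoint phi f1 f2 0 y) +
        2 * ∑ y with oddCoords y = ∅, (M - twoPoint phi f1 f2 0 y) := by
  have hL := h.even
  set H : Torus d L → ℝ := fun y => M - twoPoint phi f1 f2 0 y
  have hH : ∀ y, 0 ≤ H y := fun y => sub_nonneg.mpr (hbd 0 y)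
  set N : ℝ := ((L / 2 : ℕ) : ℝ) ^ (d - 1)
  set Δ : ℕ → ℝ := slabSum H (sublattice k (evens L)) k
  set g : ZMod L → ℝ := fun c => if c = 0 then 4 * N * M else
    Δ (L - c.val) + Δ (L - c.val - 2) + 2 * Δ (L - c.val - 1)
  have hm0 := sum_slabSum_evens_le hL hH k (e := 0) (by norm_num)
  have hm1 := sum_slabSum_evens_le hL hH k (e := 1) (by norm_num)
  have hm2 := sum_slabSum_evens_le hL hH k (e := 2) le_rfl
  simp only [Nat.sub_zero, Nat.zero_mod, Nat.one_mod, Nat.mod_self, if_true, if_false,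
    one_ne_zero] at hm0 hm1 hm2
  have hd : 2 ≤ d := Fin.nontrivial_iff_two_le.mp ⟨j, k, hjk⟩
  have hN : N = ((L / 2 : ℕ) : ℝ) * ((L / 2 : ℕ) : ℝ) ^ (d - 2) := by
    rw [← pow_succ', show d - 2 + 1 = d - 1 by omega]
  have hK : (0 : ℝ) < ((L / 2 : ℕ) : ℝ) := by exact_mod_cast (show 0 < L / 2 by omega)
  refine le_of_mul_le_mul_left ?_ (pow_pos hK (d - 2))
  calc ((L / 2 : ℕ) : ℝ) ^ (d - 2) *
        (2 * ((L / 2 : ℕ) : ℝ) * slabSum H (sublattice j (evens L)) j (D - 1))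
      = ∑ r ∈ sublattice j (evens L), 2 * N * H (slabPoint j (D - 1) r) := by
        rw [hN, slabSum, Finset.mul_sum, Finset.mul_sum]
        exact Finset.sum_congr rfl fun r _ => by ring
    _ ≤ ∑ r ∈ sublattice j (evens L), g (r k) :=
        Finset.sum_le_sum fun r hr => h.deficit_slabPoint_le hbd hjk hD hD2 hDL hr
    _ = ((L / 2 : ℕ) : ℝ) ^ (d - 2) * (4 * N * M + (∑ c ∈ (evens L).erase 0, Δ (L - c.val) +
          ∑ c ∈ (evens L).erase 0, Δ (L - c.val - 2) +
          2 * ∑ c ∈ (evens L).erase 0, Δ (L - c.val - 1))) := by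
        rw [sum_sublattice_apply hjk.symm, card_evens hL, ← Finset.add_sum_erase _ _
          (zero_mem_evens hL), Finset.mul_sum, ← Finset.sum_add_distrib, ← Finset.sum_add_distrib]
        congr 2
        · simp only [g, if_true]
        · exact Finset.sum_congr rfl fun c hc => by
            simp only [g, if_neg (Finset.ne_of_mem_erase hc)]
    _ ≤ _ := mul_le_mul_of_nonneg_left (by linarith) (by positivity)

lemma card_mul_slabSum_even_le (h : RPModel AL phi f1 f2)
    (hbd : ∀ x y : Torus d L, twoPoint phi f1 f2 x y ≤ M) (j : Fin d) {D : ℕ} (hD : D % 2 = 0)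
    (hD2 : 2 ≤ D) (hDK : D ≤ L / 2) :
    ((L / 2 - D : ℕ) : ℝ) *
        (slabSum (fun y => M - twoPoint phi f1 f2 0 y) (sublattice j (evens L)) j D +
          slabSum (fun y => M - twoPoint phi f1 f2 0 y) (sublattice j (evens L)) j (D - 2)) ≤
      2 * ∑ y with oddCoords y = {j}, (M - twoPoint phi f1 f2 0 y) := by
  have hL := h.even
  obtain ⟨K, hK⟩ := id hL
  have hΛ := sub_mem_sublattice (j := j) (sub_mem_evens hL)
  have h0 := zero_mem_sublattice (j := j) (zero_mem_evens hL)
  have hΛj : ∀ r ∈ sublattice j (evens L), r j = 0 := fun r hr => (mem_sublattice.mp hr).1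
  have hT (i₀ i : ℕ) (_ : i₀ ≤ i) (hi : i + i₀ < L / 2) : ∀ r ∈ sublattice j (evens L),
      slabPoint j (i + i) r ∈ Finset.univ.filter fun y => oddCoords y = {j} := by
    intro r hr
    rw [Finset.mem_filter, oddCoords_slabPoint hL (by omega)
      fun k hk => (mem_evens hL).mp ((mem_sublattice.mp hr).2 k hk), if_pos (by omega)]
    exact ⟨Finset.mem_univ _, rfl⟩
  have hA1 := h.card_mul_slabSum_le hΛ h0 hΛj hbd (D / 2) (hT (D / 2))
  have hA2 := h.card_mul_slabSum_le hΛ h0 hΛj hbd (D / 2 - 1) (hT (D / 2 - 1))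
  rw [show D / 2 + D / 2 = D by omega, show L / 2 - 2 * (D / 2) = L / 2 - D by omega] at hA1
  rw [show D / 2 - 1 + (D / 2 - 1) = D - 2 by omega,
    show L / 2 - 2 * (D / 2 - 1) = L / 2 - D + 2 by omega, Nat.cast_add] at hA2
  have hΔ : 0 ≤ slabSum (fun y => M - twoPoint phi f1 f2 0 y) (sublattice j (evens L)) j (D - 2) :=
    Finset.sum_nonneg fun r _ => sub_nonneg.mpr (hbd 0 _)
  nlinarith

lemma deficit_bound_of_even (h : RPModel AL phi f1 f2)
    (hbd : ∀ x y : Torus d L, twoPoint phi f1 f2 x y ≤ M) {j k : Fin d} (hjk : j ≠ k)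
    {x : Torus d L} (hx : ∀ i, (x i).val % 2 = 0) {D : ℕ} (hDx : (D : ZMod L) = -x j)
    (hD : D % 2 = 0) (hD2 : 2 ≤ D) (hDK : D ≤ L / 2) :
    ((L / 2 - D : ℕ) : ℝ) * ((L / 2 : ℕ) : ℝ) ^ (d - 1) * (M - twoPoint phi f1 f2 0 x) ≤
      ∑ y, (M - twoPoint phi f1 f2 0 y) + 2 * ((L / 2 : ℕ) : ℝ) ^ (d - 1) * M := by
  have hL := h.even
  obtain ⟨K, hK⟩ := id hL
  set H : Torus d L → ℝ := fun y => M - twoPoint phi f1 f2 0 y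
  have hH : ∀ y, 0 ≤ H y := fun y => sub_nonneg.mpr (hbd 0 y)
  have hxv : (x j).val = L - D := by
    rw [← neg_neg (x j), ← hDx, ZMod.neg_val, ZMod.val_natCast_of_lt (by omega),
      if_neg fun e => by rw [← ZMod.val_eq_zero, ZMod.val_natCast_of_lt (by omega)] at e; omega]
  have hxj : x j ≠ 0 := by rw [ne_eq, ← ZMod.val_eq_zero, hxv]; omega
  have hpt := h.deficit_le_of_even hbd hx hxj
  rw [hxv, show L - (L - D) = D by omega] at hpt
  have hA := h.card_mul_slabSum_even_le hbd j hD hD2 hDK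
  have hR := h.slabSum_le_of_even hbd hjk hD hD2 (by omega)
  have hsum := sum_oddCoords_le hH {{j}, {k}, ∅}
  rw [Finset.sum_insert (by simp [hjk]), Finset.sum_pair (by simp)] at hsum
  have hc : 0 ≤ ((L / 2 - D : ℕ) : ℝ) := Nat.cast_nonneg _
  have hcK : ((L / 2 - D : ℕ) : ℝ) ≤ ((L / 2 : ℕ) : ℝ) := Nat.cast_le.mpr (Nat.sub_le _ _)
  have hΔ : 0 ≤ slabSum H (sublattice j (evens L)) j (D - 1) := Finset.sum_nonneg fun _ _ => hH _
  nlinarith [mul_le_mul_of_nonneg_left hpt hc, mul_le_mul_of_nonneg_right hcK hΔ]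

lemma deficit_bound (h : RPModel AL phi f1 f2) (hd : 2 ≤ d)
    (hbd : ∀ x y : Torus d L, twoPoint phi f1 f2 x y ≤ M) {x : Torus d L} {j : Fin d} {D : ℕ}
    (hDx : (D : ZMod L) = -x j) (hD0 : 0 < D) (hDK : D ≤ L / 2)
    (hpar : D % 2 = 1 ∨ ∀ i, (x i).val % 2 = 0) :
    ((L / 2 - D : ℕ) : ℝ) * (L : ℝ) ^ (d - 1) * (M - twoPoint phi f1 f2 0 x) ≤
      2 ^ (d - 1) * ∑ y, (M - twoPoint phi f1 f2 0 y) + 2 * (L : ℝ) ^ (d - 1) * M := by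
  have hL := h.even
  obtain ⟨K, hK⟩ := id hL
  have hDval : (D : ZMod L).val = D := ZMod.val_natCast_of_lt (by omega)
  have hxj : x j ≠ 0 := fun e => by rw [e, neg_zero, ← ZMod.val_eq_zero, hDval] at hDx; omega
  have hM : 0 ≤ M := by linarith [h.neg_le_twoPoint hbd hxj, hbd 0 x]
  have hS : 0 ≤ ∑ y, (M - twoPoint phi f1 f2 0 y) :=
    Finset.sum_nonneg fun y _ => sub_nonneg.mpr (hbd 0 y)
  have h2d : (2 : ℝ) ≤ 2 ^ (d - 1) := le_self_pow₀ (by norm_num) (by omega)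
  have hLd : (0 : ℝ) ≤ (L : ℝ) ^ (d - 1) := by positivity
  rcases hpar with hodd | heven
  · have hA := h.deficit_bound_of_odd hbd hDx hodd hDK
    rcases le_or_gt (M - twoPoint phi f1 f2 0 x) 0 with hH | hH
    · nlinarith [mul_nonneg (Nat.cast_nonneg (L / 2 - D) : (0 : ℝ) ≤ _) hLd]
    · have : ((L / 2 - D : ℕ) : ℝ) ≤ ((L / 2 - D + 1 : ℕ) : ℝ) := by exact_mod_cast Nat.le_succ _
      nlinarith [mul_le_mul_of_nonneg_right this (mul_nonneg hLd hH.le)]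
  · have := Fin.nontrivial_iff_two_le.mpr hd
    obtain ⟨k, hk⟩ := exists_ne j
    have hD : D % 2 = 0 := by rw [← hDval, hDx, val_neg_mod_two hL, heven j]
    have hB := h.deficit_bound_of_even hbd hk.symm heven hDx hD (by omega) hDK
    have hpow : (L : ℝ) ^ (d - 1) = 2 ^ (d - 1) * ((L / 2 : ℕ) : ℝ) ^ (d - 1) := by
      rw [← mul_pow]
      congr 1
      rw [hK, show (K + K) / 2 = K by omega]
      push_cast
      ring
    rw [hpow]
    have := mul_le_mul_of_nonneg_left hB (by positivity : (0 : ℝ) ≤ 2 ^ (d - 1))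
    nlinarith

lemma exists_deficit_bound (h : RPModel AL phi f1 f2) (hd : 2 ≤ d)
    (hbd : ∀ x y : Torus d L, twoPoint phi f1 f2 x y ≤ M) {x : Torus d L} (hx : ∀ i, x i ≠ 0) :
    ∃ j, ((L : ℝ) / 2 - |(coordRep L (x j) : ℝ)|) * (L : ℝ) ^ (d - 1) *
        (M - twoPoint phi f1 f2 0 x) ≤
      2 ^ (d - 1) * ∑ y, (M - twoPoint phi f1 f2 0 y) + 2 * (L : ℝ) ^ (d - 1) * M := by
  have hL := h.even
  obtain ⟨K, hK⟩ := id hL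
  obtain ⟨j, hj⟩ : ∃ j, (x j).val % 2 = 1 ∨ ∀ i, (x i).val % 2 = 0 := by
    by_cases hodd : ∃ j, (x j).val % 2 = 1
    · exact hodd.imp fun j hj => Or.inl hj
    · exact ⟨⟨0, by omega⟩, Or.inr fun i => by have := not_exists.mp hodd i; omega⟩
  obtain ⟨D, hD, hDK, hsign⟩ := exists_natCast_eq_abs_coordRep hL (x j)
  have hDval : (D : ZMod L).val = D := ZMod.val_natCast_of_lt (by have := NeZero.pos L; omega)
  have hD0 : 0 < D := by
    by_contra! hD0
    rw [Nat.le_zero.mp hD0, Nat.cast_zero] at hsign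
    rcases hsign with e | e
    · exact hx j (neg_eq_zero.mp e.symm)
    · exact hx j e.symm
  refine ⟨j, ?_⟩
  have hcast : (L : ℝ) / 2 - |(coordRep L (x j) : ℝ)| = ((L / 2 - D : ℕ) : ℝ) := by
    rw [← Int.cast_abs, ← hD, Int.cast_natCast, Nat.cast_sub hDK, hK, show (K + K) / 2 = K by omega]
    push_cast
    ring
  rw [hcast]
  rcases hsign with hneg | hpos
  · refine h.deficit_bound hd hbd hneg hD0 hDK (hj.imp_left fun hj => ?_)
    rw [← hDval, hneg, val_neg_mod_two hL, hj]
  · rw [← twoPoint_zero_neg h.torusSymmetric]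
    refine h.deficit_bound hd hbd (by rw [hpos, Pi.neg_apply, neg_neg]) hD0 hDK ?_
    rcases hj with hj | hj
    · exact Or.inl (by rw [← hDval, hpos, hj])
    · exact Or.inr fun i => by rw [Pi.neg_apply, val_neg_mod_two hL, hj i]

end RPModel

lemma le_div_of_deficit_bound {d : ℕ} (hd : 2 ≤ d) {L D H S M C δ ε : ℝ} (hL : 0 < L)
    (hε0 : 0 ≤ ε) (hε : ε < 1 / 2) (hD : D < ε * L) (hδ : 0 < δ) (hMδ : M ≤ δ * L)
    (hS0 : 0 ≤ S) (hS : S ≤ (M - C - δ) * L ^ d)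
    (hH : (L / 2 - D) * L ^ (d - 1) * H ≤ 2 ^ (d - 1) * S + 2 * L ^ (d - 1) * M) :
    H ≤ (M - C) / (1 / 2 - ε) ^ d := by
  have hε2 : 0 < 1 / 2 - ε := by linarith
  have hP : 0 < L ^ (d - 1) := pow_pos hL _
  have hLd : L ^ d = L ^ (d - 1) * L := by rw [← pow_succ, Nat.sub_add_cancel (by omega)]
  have h2d : (2 : ℝ) ≤ 2 ^ (d - 1) := le_self_pow₀ (by norm_num) (by omega)
  have hMC : 0 ≤ M - C - δ :=
    nonneg_of_mul_nonneg_left (hS0.trans hS) (pow_pos hL d)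
  have hstep : (L / 2 - D) * H ≤ 2 ^ (d - 1) * (M - C) * L := by
    refine le_of_mul_le_mul_left ?_ hP
    rw [hLd] at hS
    nlinarith [mul_le_mul_of_nonneg_left hS (by positivity : (0 : ℝ) ≤ 2 ^ (d - 1)),
      mul_le_mul_of_nonneg_left (mul_le_mul_of_nonneg_right h2d (mul_nonneg hδ.le hL.le)) hP.le]
  rw [le_div_iff₀ (pow_pos hε2 d)]
  rcases le_or_gt H 0 with hH0 | hH0
  · nlinarith [pow_pos hε2 d]
  · have h1 : (1 / 2 - ε) * H ≤ 2 ^ (d - 1) * (M - C) := by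
      refine le_of_mul_le_mul_right ?_ hL
      nlinarith [mul_le_mul_of_nonneg_right (by linarith : (1 / 2 - ε) * L ≤ L / 2 - D) hH0.le]
    calc H * (1 / 2 - ε) ^ d = (1 / 2 - ε) * H * (1 / 2 - ε) ^ (d - 1) := by
          rw [← Nat.sub_add_cancel (by omega : 1 ≤ d), pow_succ, Nat.add_sub_cancel]
          ring
      _ ≤ 2 ^ (d - 1) * (M - C) * (1 / 2 - ε) ^ (d - 1) :=
          mul_le_mul_of_nonneg_right h1 (by positivity)
      _ = (M - C) * (2 * (1 / 2 - ε)) ^ (d - 1) := by rw [mul_pow]; ring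
      _ ≤ (M - C) * 1 :=
          mul_le_mul_of_nonneg_left (pow_le_one₀ (by linarith) (by linarith)) (by linarith)
      _ = M - C := mul_one _

theorem statement7_general (d : ℕ) (hd : 2 ≤ d) (Sig : ℕ → Type*)
    (AL : ∀ L : ℕ, Subalgebra ℝ (MState d L (Sig L) → ℝ))
    (phi : ∀ L : ℕ, (MState d L (Sig L) → ℝ) →ₗ[ℝ] ℝ)
    (f1 f2 : ∀ L : ℕ, Sig L → ℝ)
    (hF1 : ∀ (L : ℕ) (x : Torus d L), site (f1 L) x ∈ AL L)
    (hF2 : ∀ (L : ℕ) (x : Torus d L), site (f2 L) x ∈ AL L)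
    (hRP : ∀ (L : ℕ) [NeZero L], Even L → RPEdges (AL L) (phi L))
    (hsym : ∀ (L : ℕ) [NeZero L], Even L → TorusSymmetric (phi L) (f1 L) (f2 L))
    (C₁ : ℝ) (M : ℝ)
    (hliminf : ∀ δ : ℝ, 0 < δ → ∃ L₀ : ℕ, ∀ (L : ℕ) [NeZero L], Even L → L₀ ≤ L →
      C₁ - δ ≤ (∑ x : Torus d L, twoPoint (phi L) (f1 L) (f2 L) 0 x) / (L : ℝ) ^ d)
    (hbd : ∀ (L : ℕ) [NeZero L], Even L → ∀ x y : Torus d L, twoPoint (phi L) (f1 L) (f2 L) x y ≤ M) :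
    ∀ ε : ℝ, 0 < ε → ε < 1 / 2 → ∀ C : ℝ, C < C₁ →
      ∃ L₀ : ℕ, ∀ (L : ℕ) [NeZero L], Even L → L₀ ≤ L →
        ∀ x : Torus d L,
          (∀ i : Fin d, 0 < |coordRep L (x i)| ∧ (|coordRep L (x i)| : ℝ) < ε * L) →
          M - (M - C) / (1 / 2 - ε) ^ d ≤ twoPoint (phi L) (f1 L) (f2 L) 0 x := by
  intro ε hε0 hε C hC
  obtain ⟨δ, hδ, hδC⟩ : ∃ δ : ℝ, 0 < δ ∧ C₁ - δ = C + δ := ⟨(C₁ - C) / 2, by linarith, by ring⟩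
  obtain ⟨L₁, hL₁⟩ := hliminf δ hδ
  refine ⟨max L₁ (⌈M / δ⌉₊ + 1), fun L _ hL hLL x hx => ?_⟩
  have h : RPModel (AL L) (phi L) (f1 L) (f2 L) := ⟨hL, hRP L hL, hF1 L, hF2 L, hsym L hL⟩
  have hLpos : (0 : ℝ) < L := by exact_mod_cast NeZero.pos L
  have hMδ : M ≤ δ * L := by
    have : (⌈M / δ⌉₊ : ℝ) ≤ L := by
      exact_mod_cast (Nat.le_succ _).trans (le_of_max_le_right hLL)
    rw [← div_le_iff₀' hδ]
    exact (Nat.le_ceil _).trans this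
  have hS : ∑ y, (M - twoPoint (phi L) (f1 L) (f2 L) 0 y) ≤ (M - C - δ) * L ^ d := by
    have := hL₁ L hL (le_of_max_le_left hLL)
    rw [hδC, le_div_iff₀ (by positivity)] at this
    simp only [Finset.sum_sub_distrib, Finset.sum_const, Finset.card_univ, Fintype.card_fun,
      ZMod.card, Fintype.card_fin, nsmul_eq_mul, Nat.cast_pow]
    linarith
  obtain ⟨j, hj⟩ := h.exists_deficit_bound hd (hbd L hL) (x := x)
    fun i e => (hx i).1.ne' (by rw [e, coordRep_zero, abs_zero])
  have := le_div_of_deficit_bound hd hLpos hε0.le hε (hx j).2 hδ hMδ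
    (Finset.sum_nonneg fun y _ => sub_nonneg.mpr (hbd L hL 0 y)) hS hj
  linarith

/-- If moreover `⟨·⟩` is reflection positive also for reflections through vertices, then for
`ε ∈ (0,1/2)`, `C < C₁` and all large even `L`, at every point `x` whose coordinates are all
in `(0, εL)` one has `G_L(o,x) ≥ M − (1/2 − ε)^{-d} (M − C)`. -/
theorem statement7 (d : ℕ) (hd : 2 ≤ d) (Sig : ℕ → Type*)
    (AL : ∀ L : ℕ, Subalgebra ℝ (MState d L (Sig L) → ℝ))
    (hfin : ∀ L : ℕ, FiniteDimensional ℝ (AL L))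
    (phi : ∀ L : ℕ, (MState d L (Sig L) → ℝ) →ₗ[ℝ] ℝ)
    (hone : ∀ L : ℕ, phi L 1 = 1)
    (f1 f2 : ∀ L : ℕ, Sig L → ℝ)
    (hF1 : ∀ (L : ℕ) (x : Torus d L), site (f1 L) x ∈ AL L)
    (hF2 : ∀ (L : ℕ) (x : Torus d L), site (f2 L) x ∈ AL L)
    (hRP : ∀ (L : ℕ) [NeZero L], Even L → RPEdges (AL L) (phi L))
    (hRPv : ∀ (L : ℕ) [NeZero L], Even L → RPVertices (AL L) (phi L))
    (hsym : ∀ (L : ℕ) [NeZero L], Even L → TorusSymmetric (phi L) (f1 L) (f2 L))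
    (C₁ : ℝ) (hC₁ : 0 < C₁) (M : ℝ) (hM : 0 < M)
    (hliminf : ∀ δ : ℝ, 0 < δ → ∃ L₀ : ℕ, ∀ (L : ℕ) [NeZero L], Even L → L₀ ≤ L →
      C₁ - δ ≤ (∑ x : Torus d L, twoPoint (phi L) (f1 L) (f2 L) 0 x) / (L : ℝ) ^ d)
    (hbd : ∀ (L : ℕ) [NeZero L], Even L → ∀ x y : Torus d L, twoPoint (phi L) (f1 L) (f2 L) x y ≤ M) :
    ∀ ε : ℝ, 0 < ε → ε < 1 / 2 → ∀ C : ℝ, C < C₁ →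
      ∃ L₀ : ℕ, ∀ (L : ℕ) [NeZero L], Even L → L₀ ≤ L →
        ∀ x : Torus d L,
          (∀ i : Fin d, 0 < |coordRep L (x i)| ∧ (|coordRep L (x i)| : ℝ) < ε * L) →
          M - (M - C) / (1 / 2 - ε) ^ d ≤ twoPoint (phi L) (f1 L) (f2 L) 0 x :=
  statement7_general d hd Sig AL phi f1 f2 hF1 hF2 hRP hsym C₁ M hliminf hbd

end RPPaper
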